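/- If sampling (a = 1) is optimal at the no-packet state (v1, ∞) for the limiting discounted value function, i.e., V((v1,∞); 1) ≤ V((v1,∞); 0), then sampling is also optimal at (v1 + x, ∞) for every integer x ≥ 1. -/
import Mathlib


/-- Value-iteration iterates for the sampling CMDP.  States are `(v1, v2)` with
`v2 : Option ℕ` (`none` meaning the transmitter holds no packet, `v2 = ∞`). -/
noncomputable def V (α q lam : ℝ) : ℕ → ℕ → Option ℕ → ℝ
  | 0, _, _ => 0
  | n + 1, v1, v2 =>
      (v1 : ℝ) +
        min
          (lam + α * ((1 - q) * V α q lam n (v1 + 1) (some 1) +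
            q * V α q lam n 1 none))
          (match v2 with
            | some w => α * ((1 - q) * V α q lam n (v1 + 1) (some (w + 1)) +
                q * V α q lam n (w + 1) none)
            | none => α * V α q lam n (v1 + 1) none)

open Filter

/-- The constant increment of the iterates in packet states. -/
noncomputable def cseq (α q : ℝ) : ℕ → ℝ
  | 0 => 0
  | n + 1 => 1 + α * (1 - q) * cseq α q n

lemma V_succ_some (α q lam : ℝ) (n v1 w : ℕ) : V α q lam (n+1) v1 (some w) =
    (v1:ℝ) + min (lam + α * ((1 - q) * V α q lam n (v1 + 1) (some 1) + q * V α q lam n 1 none))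
      (α * ((1 - q) * V α q lam n (v1 + 1) (some (w + 1)) + q * V α q lam n (w + 1) none)) := rfl

lemma V_succ_none (α q lam : ℝ) (n v1 : ℕ) : V α q lam (n+1) v1 none =
    (v1:ℝ) + min (lam + α * ((1 - q) * V α q lam n (v1 + 1) (some 1) + q * V α q lam n 1 none))
      (α * V α q lam n (v1 + 1) none) := rfl

lemma cseq_nonneg {α q : ℝ} (hα0 : 0 < α) (hα1 : α < 1) (hq1 : q < 1) :
    ∀ n, 0 ≤ cseq α q n := by
  intro n
  induction n with
  | zero => simp [cseq]
  | succ n ih =>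
      have h : 0 ≤ α * (1 - q) := mul_nonneg hα0.le (by linarith)
      have := mul_nonneg h ih
      simp only [cseq]; linarith

/-- In packet states the increment in `v1` is exactly `cseq`. -/
lemma V_incr_some (α q lam : ℝ) :
    ∀ n u w, V α q lam n (u+1) (some w) = V α q lam n u (some w) + cseq α q n := by
  intro n
  induction n with
  | zero => intro u w; simp [V, cseq]
  | succ n ih =>
      intro u w
      rw [V_succ_some, V_succ_some]
      rw [ih (u+1) 1, ih (u+1) (w+1)]
      have hmin : ∀ a b s : ℝ, min (a + s) (b + s) = min a b + s := by
        intro a b s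
        rcases le_total a b with h | h
        · rw [min_eq_left h, min_eq_left (by linarith)]
        · rw [min_eq_right h, min_eq_right (by linarith)]
      have h1 : lam + α * ((1 - q) * (V α q lam n (u + 1) (some 1) + cseq α q n)
            + q * V α q lam n 1 none)
          = (lam + α * ((1 - q) * V α q lam n (u + 1) (some 1) + q * V α q lam n 1 none))
            + α * (1 - q) * cseq α q n := by ring
      have h2 : α * ((1 - q) * (V α q lam n (u + 1) (some (w + 1)) + cseq α q n)
            + q * V α q lam n (w + 1) none)
          = (α * ((1 - q) * V α q lam n (u + 1) (some (w + 1)) + q * V α q lam n (w + 1) none))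
            + α * (1 - q) * cseq α q n := by ring
      rw [h1, h2, hmin]
      simp only [cseq]
      push_cast
      ring

/-- In no-packet states the increment in `v1` is at least `(1-q) * cseq`. -/
lemma V_incr_none {α q : ℝ} (lam : ℝ) (hα0 : 0 < α) (hα1 : α < 1)
    (hq0 : 0 < q) (hq1 : q < 1) :
    ∀ n u, V α q lam n u none + (1 - q) * cseq α q n ≤ V α q lam n (u+1) none := by
  intro n
  induction n with
  | zero => intro u; simp [V, cseq]
  | succ n ih =>
      intro u
      rw [V_succ_none, V_succ_none]
      rw [V_incr_some α q lam n (u+1) 1]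
      have hc := cseq_nonneg hα0 hα1 hq1 n
      have hc1 := cseq_nonneg hα0 hα1 hq1 (n+1)
      have key : min (lam + α * ((1 - q) * V α q lam n (u + 1) (some 1) + q * V α q lam n 1 none))
            (α * V α q lam n (u + 1) none) + α * (1 - q) * cseq α q n
          ≤ min (lam + α * ((1 - q) * (V α q lam n (u + 1) (some 1) + cseq α q n)
              + q * V α q lam n 1 none))
            (α * V α q lam n (u + 1 + 1) none) := by
        apply le_min
        · have := min_le_left (lam + α * ((1 - q) * V α q lam n (u + 1) (some 1)
              + q * V α q lam n 1 none)) (α * V α q lam n (u + 1) none)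
          nlinarith
        · have h1 := min_le_right (lam + α * ((1 - q) * V α q lam n (u + 1) (some 1)
              + q * V α q lam n 1 none)) (α * V α q lam n (u + 1) none)
          have h2 := ih (u+1)
          nlinarith
      have hcs : cseq α q (n+1) = 1 + α * (1 - q) * cseq α q n := rfl
      push_cast
      rw [hcs]
      nlinarith [key]

lemma V_incr_some_iter (α q lam : ℝ) (n u w x : ℕ) :
    V α q lam n (u + x) (some w) = V α q lam n u (some w) + x * cseq α q n := by
  induction x with
  | zero => simp
  | succ x ih =>
      have : u + (x + 1) = (u + x) + 1 := by ring
      rw [this, V_incr_some, ih]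
      push_cast
      ring

lemma V_incr_none_iter {α q : ℝ} (lam : ℝ) (hα0 : 0 < α) (hα1 : α < 1)
    (hq0 : 0 < q) (hq1 : q < 1) (n u x : ℕ) :
    V α q lam n u none + x * ((1 - q) * cseq α q n) ≤ V α q lam n (u + x) none := by
  induction x with
  | zero => simp
  | succ x ih =>
      have h := V_incr_none lam hα0 hα1 hq0 hq1 n (u + x)
      have : u + (x + 1) = (u + x) + 1 := by ring
      rw [this]
      push_cast
      push_cast at ih
      linarith

/-- Threshold structure: if sampling is optimal at the no-packet state
`(v1, ∞)` for the limiting discounted value function, it is also optimal at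
`(v1 + x, ∞)` for every integer `x ≥ 1`. -/
theorem sample_threshold (α q lam : ℝ) (hα0 : 0 < α) (hα1 : α < 1)
    (hq0 : 0 < q) (hq1 : q < 1) (hlam : 0 ≤ lam)
    (Vlim : ℕ → Option ℕ → ℝ)
    (hVlim : ∀ v1 v2, Tendsto (fun n => V α q lam n v1 v2) atTop
      (nhds (Vlim v1 v2)))
    (v1 : ℕ) (hv1 : 1 ≤ v1)
    (hopt : lam + α * ((1 - q) * Vlim (v1 + 1) (some 1) + q * Vlim 1 none) ≤
      α * Vlim (v1 + 1) none) :
    ∀ x : ℕ, 1 ≤ x →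
      lam + α * ((1 - q) * Vlim (v1 + x + 1) (some 1) + q * Vlim 1 none) ≤
        α * Vlim (v1 + x + 1) none := by
  intro x hx
  -- cseq converges to c := Vlim 2 (some 1) - Vlim 1 (some 1)
  set c : ℝ := Vlim 2 (some 1) - Vlim 1 (some 1) with hc
  have hcseq : Tendsto (fun n => cseq α q n) atTop (nhds c) := by
    have h := (hVlim 2 (some 1)).sub (hVlim 1 (some 1))
    have heq : (fun n => V α q lam n 2 (some 1) - V α q lam n 1 (some 1))
        = fun n => cseq α q n := by
      funext n
      have := V_incr_some α q lam n 1 1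
      norm_num at this ⊢
      linarith
    rwa [heq] at h
  have hc0 : 0 ≤ c :=
    le_of_tendsto_of_tendsto' tendsto_const_nhds hcseq
      (fun n => cseq_nonneg hα0 hα1 hq1 n)
  have harith : v1 + x + 1 = (v1 + 1) + x := by ring
  -- limit version of the some-increment
  have hsome : Vlim (v1 + x + 1) (some 1) = Vlim (v1 + 1) (some 1) + x * c := by
    have h1 : Tendsto (fun n => V α q lam n (v1 + x + 1) (some 1)) atTop
        (nhds (Vlim (v1 + 1) (some 1) + x * c)) := by
      have h2 : Tendsto (fun n => V α q lam n (v1 + 1) (some 1) + x * cseq α q n) atTop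
          (nhds (Vlim (v1 + 1) (some 1) + x * c)) :=
        (hVlim (v1 + 1) (some 1)).add (hcseq.const_mul _)
      have heq : (fun n => V α q lam n (v1 + 1) (some 1) + x * cseq α q n)
          = fun n => V α q lam n (v1 + x + 1) (some 1) := by
        funext n
        rw [harith]
        exact (V_incr_some_iter α q lam n (v1 + 1) 1 x).symm
      rwa [heq] at h2
    exact tendsto_nhds_unique (hVlim (v1 + x + 1) (some 1)) h1
  -- limit version of the none-increment
  have hnone : Vlim (v1 + 1) none + x * ((1 - q) * c) ≤ Vlim (v1 + x + 1) none := by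
    refine le_of_tendsto_of_tendsto'
      ((hVlim (v1 + 1) none).add ((hcseq.const_mul ((1:ℝ) - q)).const_mul (x:ℝ)))
      (hVlim (v1 + x + 1) none) ?_
    intro n
    have h := V_incr_none_iter lam hα0 hα1 hq0 hq1 n (v1 + 1) x
    rw [harith]
    calc V α q lam n (v1 + 1) none + ↑x * ((1 - q) * cseq α q n)
        = V α q lam n (v1 + 1) none + ↑x * ((1 - q) * cseq α q n) := rfl
      _ ≤ V α q lam n (v1 + 1 + x) none := h
  rw [hsome]
  have hxc : 0 ≤ (x:ℝ) * c := mul_nonneg (by positivity) hc0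
  nlinarith [mul_le_mul_of_nonneg_left hnone hα0.le]
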